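/- Let β > 0 and J > 0. Suppose s₁, s₂ ∈ (0,1) satisfy s₂ < s₁, J·s₁ = ((1+J)/β)·log((1+s₁)/(1−s₁)) − s₁ and −J·s₂ = ((1+J)/β)·log((1+s₂)/(1−s₂)) − s₂. Set x₁ = (1+s₁)/2 and x₂ = (1+s₂)/2. Then F_{β,J}(x₁, x₁) < F_{β,J}(x₂, 1−x₂). -/

import Mathlib

open Real Set

/-- The two-spin (q = 2) two-component Curie–Weiss free energy. -/
noncomputable def F2 (β J x y : ℝ) : ℝ :=
  -(1 / 2) * (x ^ 2 + (1 - x) ^ 2 + y ^ 2 + (1 - y) ^ 2)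
    - J * (x * y + (1 - x) * (1 - y))
    + ((1 + J) / β) * (x * Real.log x + (1 - x) * Real.log (1 - x)
        + y * Real.log y + (1 - y) * Real.log (1 - y))

/-!
In the magnetization coordinate `s = 2x - 1`, `F_{β,J}` at `(x, x)` and at `(x, 1 - x)` are
`φ(s) - (1 + J)/2` and `φ(s) + J s² - (1 + J)/2`, where `c = (1 + J)/β` and
`φ(s) = -2c H((1 + s)/2) - (1 + J) s²/2` with `H` the binary entropy, so
`φ'(s) = c log((1 + s)/(1 - s)) - (1 + J) s`.
The power series `log((1 + s)/(1 - s)) = ∑ 2 s^(2k+1)/(2k+1)` shows that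
`log((1 + s)/(1 - s)) / s` increases on `(0, 1)`; hence the critical-point equation at `s₁`
forces `φ' ≤ 0` on `[0, s₁]`, so `φ(s₁) ≤ φ(s₂)`, and `J s₂² > 0` makes the inequality strict.
-/

lemma log_one_add_div_one_sub_eq {t : ℝ} (ht : |t| < 1) :
    log ((1 + t) / (1 - t)) = log (1 + t) - log (1 - t) := by
  obtain ⟨h₁, h₂⟩ := abs_lt.mp ht
  exact log_div (by linarith) (by linarith)

lemma mul_log_one_add_div_one_sub_le {s t : ℝ} (ht : 0 ≤ t) (hts : t ≤ s) (hs : s < 1) :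
    s * log ((1 + t) / (1 - t)) ≤ t * log ((1 + s) / (1 - s)) := by
  have habs_t : |t| < 1 := abs_lt.mpr ⟨by linarith, by linarith⟩
  have habs_s : |s| < 1 := abs_lt.mpr ⟨by linarith, by linarith⟩
  rw [log_one_add_div_one_sub_eq habs_t, log_one_add_div_one_sub_eq habs_s]
  refine hasSum_le (fun k ↦ ?_) ((hasSum_log_sub_log_of_abs_lt_one habs_t).mul_left s)
    ((hasSum_log_sub_log_of_abs_lt_one habs_s).mul_left t)
  have hs₀ : 0 ≤ s := ht.trans hts
  calc s * (2 * (1 / (2 * (k : ℝ) + 1)) * t ^ (2 * k + 1))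
      = 2 * (1 / (2 * (k : ℝ) + 1)) * (s * t) * t ^ (2 * k) := by ring
    _ ≤ 2 * (1 / (2 * (k : ℝ) + 1)) * (s * t) * s ^ (2 * k) := by gcongr
    _ = t * (2 * (1 / (2 * (k : ℝ) + 1)) * s ^ (2 * k + 1)) := by ring

lemma hasDerivAt_binEntropy_one_add_div_two {t : ℝ} (ht : |t| < 1) :
    HasDerivAt (fun t ↦ binEntropy ((1 + t) / 2)) (-(log ((1 + t) / (1 - t)) / 2)) t := by
  obtain ⟨h₁, h₂⟩ := abs_lt.mp ht
  have hinner : HasDerivAt (fun t : ℝ ↦ (1 + t) / 2) (1 / 2) t := by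
    simpa using ((hasDerivAt_id t).const_add 1).div_const 2
  refine ((hasDerivAt_binEntropy (by linarith) (by linarith)).comp t hinner).congr_deriv ?_
  rw [log_one_add_div_one_sub_eq ht, show 1 - (1 + t) / 2 = (1 - t) / 2 by ring,
    log_div (by linarith) two_ne_zero, log_div (by linarith) two_ne_zero]
  ring

noncomputable def reducedFreeEnergy (c K t : ℝ) : ℝ :=
  -(2 * c) * binEntropy ((1 + t) / 2) - K * t ^ 2 / 2

lemma hasDerivAt_reducedFreeEnergy (c K : ℝ) {t : ℝ} (ht : |t| < 1) :
    HasDerivAt (reducedFreeEnergy c K) (c * log ((1 + t) / (1 - t)) - K * t) t := by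
  have hsq : HasDerivAt (fun t : ℝ ↦ K * t ^ 2 / 2) (K * t) t :=
    (((hasDerivAt_pow 2 t).const_mul K).div_const 2).congr_deriv (by ring)
  exact (((hasDerivAt_binEntropy_one_add_div_two ht).const_mul (-(2 * c))).sub hsq).congr_deriv
    (by ring)

lemma antitoneOn_reducedFreeEnergy {c K s : ℝ} (hc : 0 ≤ c) (hs : s < 1)
    (hcrit : c * log ((1 + s) / (1 - s)) ≤ K * s) :
    AntitoneOn (reducedFreeEnergy c K) (Icc 0 s) := by
  have hcont : Continuous (reducedFreeEnergy c K) := by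
    unfold reducedFreeEnergy
    fun_prop
  refine antitoneOn_of_hasDerivWithinAt_nonpos
    (f' := fun t ↦ c * log ((1 + t) / (1 - t)) - K * t) (convex_Icc 0 s) hcont.continuousOn
    (fun t ht ↦ ?_) (fun t ht ↦ ?_) <;>
    obtain ⟨ht₀, hts⟩ : t ∈ Ioo 0 s := by rwa [interior_Icc] at ht
  · exact (hasDerivAt_reducedFreeEnergy c K
      (abs_lt.mpr ⟨by linarith, by linarith⟩)).hasDerivWithinAt
  · have hscaled : s * (c * log ((1 + t) / (1 - t))) ≤ s * (K * t) :=
      calc s * (c * log ((1 + t) / (1 - t)))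
          = c * (s * log ((1 + t) / (1 - t))) := by ring
        _ ≤ c * (t * log ((1 + s) / (1 - s))) :=
          mul_le_mul_of_nonneg_left (mul_log_one_add_div_one_sub_le ht₀.le hts.le hs) hc
        _ = t * (c * log ((1 + s) / (1 - s))) := by ring
        _ ≤ t * (K * s) := mul_le_mul_of_nonneg_left hcrit ht₀.le
        _ = s * (K * t) := by ring
    linarith [le_of_mul_le_mul_left hscaled (ht₀.trans hts)]

lemma F2_diag (β J s : ℝ) :
    F2 β J ((1 + s) / 2) ((1 + s) / 2)
      = reducedFreeEnergy ((1 + J) / β) (1 + J) s - (1 + J) / 2 := by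
  simp only [F2, reducedFreeEnergy, binEntropy, log_inv]
  ring

lemma F2_antidiag (β J s : ℝ) :
    F2 β J ((1 + s) / 2) (1 - (1 + s) / 2)
      = reducedFreeEnergy ((1 + J) / β) (1 + J) s + J * s ^ 2 - (1 + J) / 2 := by
  simp only [F2, reducedFreeEnergy, binEntropy, log_inv,
    show 1 - (1 - (1 + s) / 2) = (1 + s) / 2 by ring]
  ring

theorem stmt_4 (β J : ℝ) (hβ : 0 < β) (hJ : 0 < J)
    (s₁ s₂ : ℝ) (hs₁ : s₁ ∈ Ioo (0 : ℝ) 1) (hs₂ : s₂ ∈ Ioo (0 : ℝ) 1)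
    (hlt : s₂ < s₁)
    (h₁ : J * s₁ = ((1 + J) / β) * Real.log ((1 + s₁) / (1 - s₁)) - s₁) :
    F2 β J ((1 + s₁) / 2) ((1 + s₁) / 2) <
      F2 β J ((1 + s₂) / 2) (1 - (1 + s₂) / 2) := by
  have hcrit : (1 + J) / β * log ((1 + s₁) / (1 - s₁)) ≤ (1 + J) * s₁ := by linarith
  have hφ : reducedFreeEnergy ((1 + J) / β) (1 + J) s₁
      ≤ reducedFreeEnergy ((1 + J) / β) (1 + J) s₂ :=
    antitoneOn_reducedFreeEnergy (by positivity) hs₁.2 hcrit ⟨hs₂.1.le, hlt.le⟩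
      ⟨hs₂.1.le.trans hlt.le, le_rfl⟩ hlt.le
  rw [F2_diag, F2_antidiag]
  linarith [mul_pos hJ (pow_pos hs₂.1 2)]
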